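/- arXiv:1910.10260 — 3 statements merged into one kernel-verified Lean document; each statement's English description precedes it below -/
import Mathlib

section
/- For every integer n ≥ 1 and every real t with 0 < t < 2(n+1), one has ∫₀^{n+1+t} sⁿ e^{-s} ds ≥ (1 − e^{−t²/(8(n+1))}) · n!. -/
/-!
Chernoff bound for the upper tail of the Gamma(n+1) distribution: for `x ≥ c` and `0 < b ≤ 1`,
`e^{-x} ≤ e^{-(1-b)c} e^{-bx}`, so `∫_c^∞ xⁿ e^{-x} dx ≤ e^{-(1-b)c} n! / b^{n+1}`.
With `μ = n+1`, `c = μ + t` and `b = μ/c` the bound reads `e^{-t} (1 + t/μ)^μ n!`, and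
`1 + u ≤ e^{u - u²/8}` for `0 ≤ u ≤ 2` turns it into `e^{-t²/(8μ)} n!`.
-/

open MeasureTheory Set Real
open scoped Nat

lemma integrableOn_pow_mul_exp_neg_mul_Ioi (n : ℕ) {r : ℝ} (hr : 0 < r) :
    IntegrableOn (fun x : ℝ => x ^ n * exp (-(r * x))) (Ioi 0) := by
  refine (integrableOn_rpow_mul_exp_neg_mul_rpow (p := 1) (s := n)
    (neg_one_lt_zero.trans_le n.cast_nonneg) one_pos hr).congr_fun (fun x _ => ?_)
    measurableSet_Ioi
  simp only [rpow_natCast, rpow_one, neg_mul]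

lemma integrableOn_pow_mul_exp_neg_Ioi (n : ℕ) {c : ℝ} (hc : 0 ≤ c) :
    IntegrableOn (fun x : ℝ => x ^ n * exp (-x)) (Ioi c) := by
  simpa using (integrableOn_pow_mul_exp_neg_mul_Ioi n one_pos).mono_set (Ioi_subset_Ioi hc)

lemma integral_pow_mul_exp_neg_mul_Ioi (n : ℕ) {r : ℝ} (hr : 0 < r) :
    ∫ x in Ioi (0 : ℝ), x ^ n * exp (-(r * x)) = n ! / r ^ (n + 1) := by
  have h := integral_rpow_mul_exp_neg_mul_Ioi (a := n + 1) (by positivity) hr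
  rw [Gamma_nat_eq_factorial, add_sub_cancel_right, ← Nat.cast_succ, rpow_natCast] at h
  simp only [rpow_natCast, one_div, inv_pow] at h
  rw [h, div_eq_inv_mul]

lemma integral_pow_mul_exp_neg_Ioi_le (n : ℕ) {b c : ℝ} (hb : 0 < b) (hb1 : b ≤ 1)
    (hc : 0 ≤ c) :
    ∫ x in Ioi c, x ^ n * exp (-x) ≤ exp (-((1 - b) * c)) * (n ! / b ^ (n + 1)) := by
  have hint := integrableOn_pow_mul_exp_neg_mul_Ioi n hb
  have hsub : Ioi c ⊆ Ioi 0 := Ioi_subset_Ioi hc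
  calc ∫ x in Ioi c, x ^ n * exp (-x)
      ≤ ∫ x in Ioi c, exp (-((1 - b) * c)) * (x ^ n * exp (-(b * x))) := by
        refine setIntegral_mono_on (integrableOn_pow_mul_exp_neg_Ioi n hc)
          ((hint.mono_set hsub).const_mul _) measurableSet_Ioi fun x hx => ?_
        have hx : c < x := hx
        rw [mul_left_comm, ← exp_add]
        gcongr
        · exact pow_nonneg (hc.trans hx.le) n
        · nlinarith
    _ ≤ ∫ x in Ioi 0, exp (-((1 - b) * c)) * (x ^ n * exp (-(b * x))) := by
        refine setIntegral_mono_set (hint.const_mul _) ?_ hsub.eventuallyLE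
        filter_upwards [ae_restrict_mem measurableSet_Ioi] with x (hx : 0 < x)
        positivity
    _ = exp (-((1 - b) * c)) * (n ! / b ^ (n + 1)) := by
        rw [integral_const_mul, integral_pow_mul_exp_neg_mul_Ioi n hb]

lemma one_add_le_exp_sub_sq_div_eight {u : ℝ} (hu0 : 0 ≤ u) (hu2 : u ≤ 2) :
    1 + u ≤ exp (u - u ^ 2 / 8) := by
  have hpoly : 1 + u ≤ (1 + (u - u ^ 2 / 8) / 2) ^ 2 := by
    nlinarith [mul_nonneg (sq_nonneg u) (sub_nonneg.2 hu2), pow_nonneg (sq_nonneg u) 2]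
  have hbase : 0 ≤ 1 + (u - u ^ 2 / 8) / 2 := by nlinarith
  calc 1 + u ≤ (1 + (u - u ^ 2 / 8) / 2) ^ 2 := hpoly
    _ ≤ exp ((u - u ^ 2 / 8) / 2) ^ 2 := by
        gcongr
        linarith [add_one_le_exp ((u - u ^ 2 / 8) / 2)]
    _ = exp (u - u ^ 2 / 8) := by rw [sq, ← exp_add, add_halves]

lemma integral_pow_mul_exp_neg_Ioi_add_le (n : ℕ) {t : ℝ} (ht0 : 0 ≤ t)
    (ht : t ≤ 2 * (n + 1)) :
    ∫ x in Ioi ((n : ℝ) + 1 + t), x ^ n * exp (-x) ≤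
      exp (-(t ^ 2) / (8 * (n + 1))) * n ! := by
  set μ : ℝ := n + 1
  have hμ : 0 < μ := by positivity
  set b := μ / (μ + t)
  have hb : 0 < b := by positivity
  have hb1 : b ≤ 1 := (div_le_one (by positivity)).2 (by linarith)
  have hgap : (1 - b) * (μ + t) = t := by
    rw [sub_mul, one_mul, div_mul_cancel₀ _ (by positivity)]; ring
  have hinv : 1 / b ^ (n + 1) ≤ exp (t - t ^ 2 / (8 * μ)) :=
    calc 1 / b ^ (n + 1) = (1 + t / μ) ^ (n + 1) := by
          rw [one_div, ← inv_pow, inv_div, add_div, div_self hμ.ne']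
      _ ≤ exp (t / μ - (t / μ) ^ 2 / 8) ^ (n + 1) := by
          gcongr
          exact one_add_le_exp_sub_sq_div_eight (by positivity)
            ((div_le_iff₀ hμ).2 (by linarith))
      _ = exp (t - t ^ 2 / (8 * μ)) := by
          rw [← exp_nat_mul]; congr 1; push_cast; field_simp; ring
  calc ∫ x in Ioi (μ + t), x ^ n * exp (-x)
      ≤ exp (-((1 - b) * (μ + t))) * (n ! / b ^ (n + 1)) :=
        integral_pow_mul_exp_neg_Ioi_le n hb hb1 (by positivity)
    _ = exp (-t) * (1 / b ^ (n + 1)) * n ! := by rw [hgap]; ring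
    _ ≤ exp (-t) * exp (t - t ^ 2 / (8 * μ)) * n ! := by gcongr
    _ = exp (-(t ^ 2) / (8 * μ)) * n ! := by rw [← exp_add]; ring_nf

theorem stmt_1_general (n : ℕ) (t : ℝ) (ht : 0 < t) (ht2 : t < 2 * (n + 1)) :
    (1 - Real.exp (-(t ^ 2) / (8 * (n + 1)))) * n.factorial ≤
      ∫ s in (0:ℝ)..(n + 1 + t), s ^ n * Real.exp (-s) := by
  have hsplit := intervalIntegral.integral_interval_add_Ioi (b := n + 1 + t)
    (integrableOn_pow_mul_exp_neg_Ioi n le_rfl)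
    (integrableOn_pow_mul_exp_neg_Ioi n (by positivity))
  rw [show ∫ x in Ioi (0 : ℝ), x ^ n * exp (-x) = (n ! : ℝ) by
    simpa using integral_pow_mul_exp_neg_mul_Ioi n one_pos] at hsplit
  linarith [integral_pow_mul_exp_neg_Ioi_add_le n ht.le ht2.le]

theorem stmt_1 (n : ℕ) (hn : 1 ≤ n) (t : ℝ) (ht : 0 < t) (ht2 : t < 2 * (n + 1)) :
    (1 - Real.exp (-(t ^ 2) / (8 * (n + 1)))) * n.factorial ≤
      ∫ s in (0:ℝ)..(n + 1 + t), s ^ n * Real.exp (-s) :=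
  stmt_1_general n t ht ht2
end

section
/- For every integer m ≥ 1, the upper incomplete Gamma function satisfies Γ(m+1, m) = ∫ₘ^∞ tᵐ e^{-t} dt ≥ m!/2. -/
open Set MeasureTheory

lemma aux_log (v : ℝ) (h0 : 0 ≤ v) (h1 : v < 1) :
    2 * v ≤ Real.log (1 + v) - Real.log (1 - v) := by
  set g : ℝ → ℝ := fun x => Real.log (1 + x) - Real.log (1 - x) - 2 * x with hg
  have hd : ∀ x ∈ Set.Ioo (0:ℝ) 1, HasDerivAt g (1 / (1 + x) - (-1) / (1 - x) - 2) x := by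
    intro x hx
    have h1x : (1:ℝ) + x ≠ 0 := by nlinarith [hx.1, hx.2]
    have h2x : (1:ℝ) - x ≠ 0 := by nlinarith [hx.1, hx.2]
    have d1 : HasDerivAt (fun x : ℝ => Real.log (1 + x)) (1 / (1 + x)) x := by
      simpa using (((hasDerivAt_id x).const_add 1).log h1x)
    have d2 : HasDerivAt (fun x : ℝ => Real.log (1 - x)) ((-1) / (1 - x)) x := by
      simpa using (((hasDerivAt_id x).const_sub 1).log h2x)
    have d3 : HasDerivAt (fun x : ℝ => 2 * x) 2 x := by
      simpa using (hasDerivAt_id x).const_mul 2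
    exact (d1.sub d2).sub d3
  have hmono : MonotoneOn g (Set.Ico (0:ℝ) 1) := by
    have hint : interior (Set.Ico (0:ℝ) 1) = Set.Ioo 0 1 := interior_Ico
    apply monotoneOn_of_deriv_nonneg (convex_Ico 0 1)
    · apply ContinuousOn.sub
      apply ContinuousOn.sub
      · refine ContinuousOn.log (by fun_prop) ?_
        intro x hx h
        have h' : (1:ℝ) + x = 0 := h
        have := hx.1; nlinarith
      · refine ContinuousOn.log (by fun_prop) ?_
        intro x hx h
        have h' : (1:ℝ) - x = 0 := h
        have h1 := hx.1; have h2 := hx.2; nlinarith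
      · exact (continuous_const.mul continuous_id).continuousOn
    · rw [hint]
      intro x hx
      exact (hd x hx).differentiableAt.differentiableWithinAt
    · rw [hint]
      intro x hx
      rw [(hd x hx).deriv]
      have hx1 : 0 < 1 + x := by nlinarith [hx.1, hx.2]
      have hx2 : 0 < 1 - x := by nlinarith [hx.1, hx.2]
      rw [div_sub_div _ _ (ne_of_gt hx1) (ne_of_gt hx2), sub_nonneg, le_div_iff₀ (by positivity)]
      nlinarith [hx.1, hx.2]
  have h0' : (0:ℝ) ∈ Set.Ico (0:ℝ) 1 := by constructor <;> norm_num
  have hv : v ∈ Set.Ico (0:ℝ) 1 := ⟨h0, h1⟩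
  have := hmono h0' hv h0
  simp only [hg] at this
  simp only [add_zero, sub_zero, Real.log_one, mul_zero] at this
  linarith

lemma aux_sym (m : ℕ) (hm : 1 ≤ m) (u : ℝ) (h0 : 0 ≤ u) (h1 : u ≤ m) :
    ((m:ℝ) - u) ^ m * Real.exp (-((m:ℝ) - u)) ≤ ((m:ℝ) + u) ^ m * Real.exp (-((m:ℝ) + u)) := by
  rcases eq_or_lt_of_le h1 with h | h
  · subst h
    have : ((m:ℝ) - m : ℝ) = 0 := by ring
    rw [this, zero_pow (by omega), zero_mul]
    positivity
  · have hM : (0:ℝ) < m := by exact_mod_cast Nat.pos_of_ne_zero (by omega)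
    have hmu : (0:ℝ) < (m:ℝ) - u := by linarith
    have hpu : (0:ℝ) < (m:ℝ) + u := by linarith
    have key : 2 * u ≤ (m:ℝ) * (Real.log ((m:ℝ) + u) - Real.log ((m:ℝ) - u)) := by
      have hv0 : 0 ≤ u / m := by positivity
      have hv1 : u / m < 1 := by rw [div_lt_one hM]; exact h
      have := aux_log (u / m) hv0 hv1
      have e1 : (1:ℝ) + u / m = ((m:ℝ) + u) / m := by field_simp
      have e2 : (1:ℝ) - u / m = ((m:ℝ) - u) / m := by field_simp
      rw [e1, e2, Real.log_div (ne_of_gt hpu) (ne_of_gt hM),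
        Real.log_div (ne_of_gt hmu) (ne_of_gt hM)] at this
      have := mul_le_mul_of_nonneg_left this (le_of_lt hM)
      calc 2 * u = (m:ℝ) * (2 * (u / m)) := by field_simp
        _ ≤ _ := by linarith
    have e1 : ((m:ℝ) - u) ^ m = Real.exp ((m:ℝ) * Real.log ((m:ℝ) - u)) := by
      rw [Real.exp_nat_mul, Real.exp_log hmu]
    have e2 : ((m:ℝ) + u) ^ m = Real.exp ((m:ℝ) * Real.log ((m:ℝ) + u)) := by
      rw [Real.exp_nat_mul, Real.exp_log hpu]
    rw [e1, e2, ← Real.exp_add, ← Real.exp_add, Real.exp_le_exp]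
    linarith

theorem stmt_5 (m : ℕ) (hm : 1 ≤ m) :
    (m.factorial : ℝ) / 2 ≤ ∫ t in Set.Ioi (m : ℝ), t ^ m * Real.exp (-t) := by
  set f : ℝ → ℝ := fun t => t ^ m * Real.exp (-t) with hf
  have hM : (0:ℝ) < m := by exact_mod_cast Nat.pos_of_ne_zero (by omega)
  have hcont : Continuous f := by fun_prop
  have heq : Set.EqOn (fun x : ℝ => Real.exp (-x) * x ^ ((m:ℝ) + 1 - 1)) f (Set.Ioi 0) := by
    intro x hx
    simp only [hf, add_sub_cancel_right]
    rw [Real.rpow_natCast]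
    ring
  -- integrability on Ioi 0
  have hInt : IntegrableOn f (Set.Ioi 0) := by
    have := Real.GammaIntegral_convergent (s := (m:ℝ) + 1) (by positivity)
    exact this.congr_fun heq measurableSet_Ioi
  -- total integral
  have htot : ∫ t in Set.Ioi (0:ℝ), f t = (m.factorial : ℝ) := by
    have h1 := Real.Gamma_eq_integral (s := (m:ℝ) + 1) (by positivity)
    rw [setIntegral_congr_fun measurableSet_Ioi heq] at h1
    rw [← h1]
    exact_mod_cast Real.Gamma_nat_eq_factorial m
  have hIntA : IntegrableOn f (Set.Ioc 0 (m:ℝ)) :=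
    hInt.mono_set Set.Ioc_subset_Ioi_self
  have hIntB : IntegrableOn f (Set.Ioi (m:ℝ)) :=
    hInt.mono_set (Set.Ioi_subset_Ioi (le_of_lt hM))
  have hsplit : (∫ t in Set.Ioc (0:ℝ) m, f t) + ∫ t in Set.Ioi (m:ℝ), f t
      = (m.factorial : ℝ) := by
    rw [← htot, ← setIntegral_union Set.Ioc_disjoint_Ioi_same measurableSet_Ioi hIntA hIntB,
      Set.Ioc_union_Ioi_eq_Ioi (le_of_lt hM)]
  -- key inequality : A ≤ B
  have hAB : (∫ t in Set.Ioc (0:ℝ) m, f t) ≤ ∫ t in Set.Ioi (m:ℝ), f t := by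
    have step1 : (∫ t in Set.Ioc (m:ℝ) (2*m), f t) ≤ ∫ t in Set.Ioi (m:ℝ), f t := by
      apply setIntegral_mono_set hIntB
      · filter_upwards [ae_restrict_mem measurableSet_Ioi] with x hx
        have hx0 : (0:ℝ) < x := lt_trans hM hx
        have h' : (0:ℝ) ≤ x ^ m * Real.exp (-x) := by positivity
        exact h'
      · filter_upwards with x hx
        exact hx.1
    have step2 : (∫ t in Set.Ioc (0:ℝ) m, f t) ≤ ∫ t in Set.Ioc (m:ℝ) (2*m), f t := by
      have e3 : (∫ t in Set.Ioc (m:ℝ) (2*m), f t) = ∫ t in (m:ℝ)..(2*m), f t := by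
        rw [intervalIntegral.integral_of_le (by linarith)]
      have e4 : (∫ t in Set.Ioc (0:ℝ) m, f t) = ∫ t in (0:ℝ)..(m:ℝ), f t := by
        rw [intervalIntegral.integral_of_le (le_of_lt hM)]
      rw [e3, e4]
      have e5 : (∫ x in (0:ℝ)..(m:ℝ), f (2*m - x)) = ∫ t in (m:ℝ)..(2*m), f t := by
        have := intervalIntegral.integral_comp_sub_left (a := (0:ℝ)) (b := (m:ℝ)) f (2*m)
        rw [this, show 2*(m:ℝ) - (m:ℝ) = (m:ℝ) by ring, show 2*(m:ℝ) - 0 = 2*(m:ℝ) by ring]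
      rw [← e5]
      apply intervalIntegral.integral_mono_on (le_of_lt hM)
      · exact hcont.intervalIntegrable _ _
      · exact (hcont.comp (by fun_prop)).intervalIntegrable _ _
      · intro x hx
        have hx0 : 0 ≤ x := hx.1
        have hxm : x ≤ m := hx.2
        have := aux_sym m hm ((m:ℝ) - x) (by linarith) (by linarith)
        simp only [hf]
        have e6 : (m:ℝ) - ((m:ℝ) - x) = x := by ring
        have e7 : (m:ℝ) + ((m:ℝ) - x) = 2*m - x := by ring
        rw [e6, e7] at this
        exact this
    linarith
  linarith
end

section
/- Fix an integer n ≥ 1 and a real λ > 0. The function f(z) = e^{(z − 1/z)/(n+2)} − λ^{1/(n+2)} z on (0, ∞) has at most four zeros. -/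
/-! Taking logarithms, `f z = 0` on `(0, ∞)` becomes `g z = log λ / N` with `N = n + 2` and
`g z = (z - z⁻¹) / N - log z`. Since `g' z = (z² - N z + 1) / (N z²)` and `z² - N z + 1` has two
positive roots `p ≤ q` (their product is `1`), `g` is strictly monotone on each of `(0, p]`,
`[p, q]` and `[q, ∞)`, so it takes every value at most three times. -/

open Set Real

theorem Set.encard_le_card_of_subset_iUnion {α ι : Type*} [Fintype ι] {S : Set α}
    {s : ι → Set α} (hS : S ⊆ ⋃ i, s i) (h : ∀ i, (S ∩ s i).Subsingleton) :
    S.encard ≤ Fintype.card ι :=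
  calc S.encard = (⋃ i, S ∩ s i).encard := by rw [← inter_iUnion, inter_eq_left.mpr hS]
    _ ≤ ∑ i, (S ∩ s i).encard := encard_iUnion_le_of_fintype _
    _ ≤ ∑ _i : ι, 1 := Finset.sum_le_sum fun i _ => encard_le_one_iff_subsingleton.mpr (h i)
    _ = Fintype.card ι := by simp

theorem encard_fiber_le_three_of_hasDerivAt {g g' : ℝ → ℝ} {p q : ℝ} (hp : 0 < p) (hpq : p ≤ q)
    (hg : ∀ z, 0 < z → HasDerivAt g (g' z) z)
    (hpos : ∀ z, 0 < z → z < p ∨ q < z → 0 < g' z)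
    (hneg : ∀ z, p < z → z < q → g' z < 0) (b : ℝ) :
    {z | 0 < z ∧ g z = b}.encard ≤ 3 := by
  have hcont : ContinuousOn g (Ioi 0) := fun z hz => (hg z hz).continuousAt.continuousWithinAt
  have hderiv : ∀ z, 0 < z → deriv g z = g' z := fun z hz => (hg z hz).deriv
  have hmono_left : StrictMonoOn g (Ioc 0 p) :=
    strictMonoOn_of_deriv_pos (convex_Ioc 0 p) (hcont.mono Ioc_subset_Ioi_self) fun z hz => by
      rw [interior_Ioc] at hz
      rw [hderiv z hz.1]
      exact hpos z hz.1 (.inl hz.2)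
  have hanti : StrictAntiOn g (Icc p q) :=
    strictAntiOn_of_deriv_neg (convex_Icc p q) (hcont.mono fun z hz => hp.trans_le hz.1)
      fun z hz => by
        rw [interior_Icc] at hz
        rw [hderiv z (hp.trans hz.1)]
        exact hneg z hz.1 hz.2
  have hmono_right : StrictMonoOn g (Ici q) :=
    strictMonoOn_of_deriv_pos (convex_Ici q) (hcont.mono fun z hz => (hp.trans_le hpq).trans_le hz)
      fun z hz => by
        rw [interior_Ici] at hz
        have hz0 : 0 < z := (hp.trans_le hpq).trans hz
        rw [hderiv z hz0]
        exact hpos z hz0 (.inr hz)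
  have hfiber : ∀ I, InjOn g I → ({z | 0 < z ∧ g z = b} ∩ I).Subsingleton :=
    fun I hI x ⟨⟨_, hx⟩, hxI⟩ y ⟨⟨_, hy⟩, hyI⟩ => hI hxI hyI (hx.trans hy.symm)
  refine encard_le_card_of_subset_iUnion (s := ![Ioc 0 p, Icc p q, Ici q]) ?_ ?_ |>.trans (by simp)
  · rintro z ⟨hz, -⟩
    rcases le_or_gt z p with hzp | hpz
    · exact mem_iUnion.mpr ⟨0, hz, hzp⟩
    rcases le_or_gt z q with hzq | hqz
    · exact mem_iUnion.mpr ⟨1, hpz.le, hzq⟩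
    · exact mem_iUnion.mpr ⟨2, hqz.le⟩
  · intro i
    fin_cases i
    exacts [hfiber _ hmono_left.injOn, hfiber _ hanti.injOn, hfiber _ hmono_right.injOn]

theorem exists_roots_sq_sub_mul_add_one {N : ℝ} (hN : 2 ≤ N) :
    ∃ p q : ℝ, 0 < p ∧ p ≤ q ∧ ∀ z, z ^ 2 - N * z + 1 = (z - p) * (z - q) := by
  have hs : √(N ^ 2 - 4) ^ 2 = N ^ 2 - 4 := sq_sqrt (by nlinarith)
  have hsN : √(N ^ 2 - 4) < N := by nlinarith [sqrt_nonneg (N ^ 2 - 4)]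
  refine ⟨(N - √(N ^ 2 - 4)) / 2, (N + √(N ^ 2 - 4)) / 2, by linarith, by
    linarith [sqrt_nonneg (N ^ 2 - 4)], fun z => by linear_combination hs / 4⟩

theorem hasDerivAt_sub_inv_div_sub_log {N z : ℝ} (hN : N ≠ 0) (hz : z ≠ 0) :
    HasDerivAt (fun z => (z - z⁻¹) / N - log z) ((z ^ 2 - N * z + 1) / (N * z ^ 2)) z := by
  refine ((((hasDerivAt_id z).sub (hasDerivAt_inv hz)).div_const N).sub
    (hasDerivAt_log hz)).congr_deriv ?_
  field_simp
  ring

theorem encard_fiber_sub_inv_div_sub_log_le_three {N : ℝ} (hN : 2 ≤ N) (b : ℝ) :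
    {z | 0 < z ∧ (z - z⁻¹) / N - log z = b}.encard ≤ 3 := by
  obtain ⟨p, q, hp, hpq, hroots⟩ := exists_roots_sq_sub_mul_add_one hN
  refine encard_fiber_le_three_of_hasDerivAt hp hpq
    (fun z hz => hasDerivAt_sub_inv_div_sub_log (by linarith) hz.ne') ?_ ?_ b
  · rintro z hz (hzp | hqz)
    · rw [hroots]
      exact div_pos (mul_pos_of_neg_of_neg (by linarith) (by linarith)) (by positivity)
    · rw [hroots]
      exact div_pos (mul_pos (by linarith) (by linarith)) (by positivity)
  · intro z hpz hzq
    rw [hroots]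
    exact div_neg_of_neg_of_pos (mul_neg_of_pos_of_neg (by linarith) (by linarith))
      (by have := hp.trans hpz; positivity)

theorem exp_sub_mul_eq_zero_iff {u c z : ℝ} (hc : 0 < c) (hz : 0 < z) :
    exp u - c * z = 0 ↔ u - log z = log c := by
  rw [sub_eq_zero, ← exp_log (mul_pos hc hz), exp_eq_exp, log_mul hc.ne' hz.ne']
  constructor <;> intro h <;> linarith

theorem stmt_6_general (n : ℕ) (lam : ℝ) (hlam : 0 < lam) :
    letI f : ℝ → ℝ := fun z =>
      Real.exp ((z - 1 / z) / (n + 2)) - lam ^ ((1 : ℝ) / (n + 2)) * z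
    {z : ℝ | 0 < z ∧ f z = 0}.Finite ∧ {z : ℝ | 0 < z ∧ f z = 0}.ncard ≤ 4 := by
  beta_reduce
  have hc : 0 < lam ^ ((1 : ℝ) / (n + 2)) := rpow_pos_of_pos hlam _
  have hzeros : {z : ℝ | 0 < z ∧ exp ((z - 1 / z) / (n + 2)) - lam ^ ((1 : ℝ) / (n + 2)) * z = 0} =
      {z | 0 < z ∧ (z - z⁻¹) / (n + 2) - log z = log (lam ^ ((1 : ℝ) / (n + 2)))} := by
    ext z
    exact and_congr_right fun hz => by rw [one_div z]; exact exp_sub_mul_eq_zero_iff hc hz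
  rw [← encard_le_coe_iff_finite_ncard_le, hzeros]
  exact (encard_fiber_sub_inv_div_sub_log_le_three (by linarith [n.cast_nonneg (α := ℝ)]) _).trans
    (by norm_num)

theorem stmt_6 (n : ℕ) (hn : 1 ≤ n) (lam : ℝ) (hlam : 0 < lam) :
    letI f : ℝ → ℝ := fun z =>
      Real.exp ((z - 1 / z) / (n + 2)) - lam ^ ((1 : ℝ) / (n + 2)) * z
    {z : ℝ | 0 < z ∧ f z = 0}.Finite ∧ {z : ℝ | 0 < z ∧ f z = 0}.ncard ≤ 4 :=
  stmt_6_general n lam hlam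
end
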